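/- arXiv:2111.14499 — 2 statements merged into one kernel-verified Lean document; each statement's English description precedes it below -/
import Mathlib

section
/- Fix k ≥ 0 and set x₀ = (k + 3 + √(k² − 2k + 9))/2 and r₀ = x₀ + ln((x₀ − k)/x₀²). Then: x₀ > 2 and x₀ > k; x₀ is a fixed point of the Chialvo map at parameter r₀, i.e. x₀²·exp(r₀ − x₀) + k = x₀; the multiplier there is −1, i.e. x₀(2 − x₀)·exp(r₀ − x₀) = −1; the transversality condition holds, i.e. ∂²f/∂r∂x evaluated at (x₀, r₀) equals −1 ≠ 0; and the flip nondegeneracy quantity (1/2)·(∂²f/∂x²(x₀, r₀))² + (1/3)·∂³f/∂x³(x₀, r₀) is strictly positive (so the flip bifurcation at r₀ is supercritical). -/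
/-!
The fixed-point equation `x² e^{r-x} + k = x` and the multiplier equation `x (2 - x) e^{r-x} = -1`
are compatible exactly when `(2 - x)(x - k) = -x`, i.e. `x² - (k + 3) x + 2k = 0`; `x₀` is the larger
root of this quadratic and `r₀` solves the fixed-point equation. Since `∂_r e^{r-x} = e^{r-x}`, the
mixed partial `∂²f/∂r∂x` equals the multiplier `∂f/∂x`. Finally, with `e^{r₀-x₀} = 1/(x₀² - 2x₀)`,
the nondegeneracy quantity is `((x₀ - 2)⁴ + 8x₀ - 4) / (6 (x₀² - 2x₀)²)`, positive as `x₀ > 2`.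
-/

open Real

theorem HasDerivAt.mul_exp_sub {p : ℝ → ℝ} {p' x : ℝ} (hp : HasDerivAt p p' x) (r : ℝ) :
    HasDerivAt (fun x => p x * Real.exp (r - x)) ((p' - p x) * Real.exp (r - x)) x := by
  have hexp : HasDerivAt (fun x => Real.exp (r - x)) (Real.exp (r - x) * -1) x :=
    ((hasDerivAt_id x).const_sub r).exp
  exact (hp.mul hexp).congr_deriv (by ring)

section Derivatives

variable (k r : ℝ)

theorem deriv_chialvo :
    deriv (fun x => x ^ 2 * exp (r - x) + k) = fun x => x * (2 - x) * exp (r - x) := by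
  funext x
  have hp : HasDerivAt (fun x : ℝ => x ^ 2) (2 * x) x := by simpa using hasDerivAt_pow 2 x
  exact ((hp.mul_exp_sub r).add_const k).deriv.trans (by ring)

theorem deriv_deriv_chialvo :
    deriv (deriv (fun x => x ^ 2 * exp (r - x) + k)) =
      fun x => (x ^ 2 - 4 * x + 2) * exp (r - x) := by
  rw [deriv_chialvo]
  funext x
  have hp : HasDerivAt (fun x => x * (2 - x)) (2 - 2 * x) x := by
    exact ((hasDerivAt_id' x).mul ((hasDerivAt_id' x).const_sub 2)).congr_deriv (by ring)
  exact (hp.mul_exp_sub r).deriv.trans (by ring)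

theorem deriv_deriv_deriv_chialvo :
    deriv (deriv (deriv (fun x => x ^ 2 * exp (r - x) + k))) =
      fun x => (-x ^ 2 + 6 * x - 6) * exp (r - x) := by
  rw [deriv_deriv_chialvo]
  funext x
  have hp : HasDerivAt (fun x => x ^ 2 - 4 * x + 2) (2 * x - 4) x := by
    have hsq : HasDerivAt (fun x : ℝ => x ^ 2) (2 * x) x := by simpa using hasDerivAt_pow 2 x
    exact ((hsq.sub ((hasDerivAt_id' x).const_mul 4)).add_const 2).congr_deriv (by ring)
  exact (hp.mul_exp_sub r).deriv.trans (by ring)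

theorem deriv_param_deriv_chialvo (x : ℝ) :
    deriv (fun r => deriv (fun x => x ^ 2 * exp (r - x) + k) x) r = x * (2 - x) * exp (r - x) := by
  simp_rw [deriv_chialvo]
  exact (((hasDerivAt_id' r).sub_const x).exp.const_mul (x * (2 - x))).deriv.trans (by ring)

end Derivatives

noncomputable def chialvoFlipPoint (k : ℝ) : ℝ := (k + 3 + √(k ^ 2 - 2 * k + 9)) / 2

theorem abs_sub_one_lt_sqrt (k : ℝ) : |k - 1| < √(k ^ 2 - 2 * k + 9) := by
  rw [Real.lt_sqrt (abs_nonneg _), sq_abs]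
  linarith

theorem two_lt_chialvoFlipPoint (k : ℝ) : 2 < chialvoFlipPoint k := by
  have := (neg_le_abs (k - 1)).trans_lt (abs_sub_one_lt_sqrt k)
  unfold chialvoFlipPoint
  linarith

theorem lt_chialvoFlipPoint (k : ℝ) : k < chialvoFlipPoint k := by
  have := (le_abs_self (k - 1)).trans_lt (abs_sub_one_lt_sqrt k)
  unfold chialvoFlipPoint
  linarith

theorem chialvoFlipPoint_isRoot (k : ℝ) :
    chialvoFlipPoint k ^ 2 - (k + 3) * chialvoFlipPoint k + 2 * k = 0 := by
  have hs : √(k ^ 2 - 2 * k + 9) ^ 2 = k ^ 2 - 2 * k + 9 :=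
    Real.sq_sqrt (by nlinarith [sq_nonneg (k - 1)])
  unfold chialvoFlipPoint
  linear_combination hs / 4

theorem flip_nondegeneracy_pos {x E : ℝ} (hx : 2 < x) (hE : x * (2 - x) * E = -1) :
    0 < (1 / 2) * ((x ^ 2 - 4 * x + 2) * E) ^ 2 + (1 / 3) * ((-x ^ 2 + 6 * x - 6) * E) := by
  have hu : 0 < x ^ 2 - 2 * x := by nlinarith
  obtain rfl : E = 1 / (x ^ 2 - 2 * x) := by
    rw [eq_div_iff hu.ne']
    linear_combination -hE
  have hform : (1 / 2) * ((x ^ 2 - 4 * x + 2) * (1 / (x ^ 2 - 2 * x))) ^ 2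
      + (1 / 3) * ((-x ^ 2 + 6 * x - 6) * (1 / (x ^ 2 - 2 * x)))
      = ((x - 2) ^ 4 + 8 * x - 4) / (6 * (x ^ 2 - 2 * x) ^ 2) := by
    field_simp
    ring
  rw [hform]
  have : 0 < (x - 2) ^ 4 + 8 * x - 4 := by linarith [pow_nonneg (sub_nonneg.2 hx.le) 4]
  positivity

theorem chialvo_flip_bifurcation_general (k x₀ r₀ : ℝ)
    (hx₀ : x₀ = (k + 3 + Real.sqrt (k ^ 2 - 2 * k + 9)) / 2)
    (hr₀ : r₀ = x₀ + Real.log ((x₀ - k) / x₀ ^ 2)) :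
    2 < x₀ ∧ k < x₀ ∧
    x₀ ^ 2 * Real.exp (r₀ - x₀) + k = x₀ ∧
    x₀ * (2 - x₀) * Real.exp (r₀ - x₀) = -1 ∧
    deriv (fun r : ℝ => deriv (fun x : ℝ => x ^ 2 * Real.exp (r - x) + k) x₀) r₀ = -1 ∧
    deriv (fun r : ℝ => deriv (fun x : ℝ => x ^ 2 * Real.exp (r - x) + k) x₀) r₀ ≠ 0 ∧
    0 < (1 / 2) * (deriv (deriv (fun x : ℝ => x ^ 2 * Real.exp (r₀ - x) + k)) x₀) ^ 2 +
        (1 / 3) * deriv (deriv (deriv (fun x : ℝ => x ^ 2 * Real.exp (r₀ - x) + k))) x₀ := by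
  change x₀ = chialvoFlipPoint k at hx₀
  have hx2 : 2 < x₀ := hx₀ ▸ two_lt_chialvoFlipPoint k
  have hxk : k < x₀ := hx₀ ▸ lt_chialvoFlipPoint k
  have hroot := hx₀ ▸ chialvoFlipPoint_isRoot k
  have hx0 : x₀ ≠ 0 := by positivity
  have hexp : exp (r₀ - x₀) = (x₀ - k) / x₀ ^ 2 := by
    rw [hr₀, add_sub_cancel_left, exp_log (div_pos (by linarith) (by positivity))]
  have hfix : x₀ ^ 2 * exp (r₀ - x₀) + k = x₀ := by
    rw [hexp]; field_simp; ring
  have hmul : x₀ * (2 - x₀) * exp (r₀ - x₀) = -1 := by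
    rw [hexp]; field_simp; linear_combination -hroot
  have hmixed := (deriv_param_deriv_chialvo k r₀ x₀).trans hmul
  refine ⟨hx2, hxk, hfix, hmul, hmixed, by rw [hmixed]; norm_num, ?_⟩
  rw [deriv_deriv_deriv_chialvo, deriv_deriv_chialvo]
  exact flip_nondegeneracy_pos hx2 hmul

/-- Supercritical flip bifurcation in the 1D Chialvo map. For fixed `k ≥ 0`,
with `x₀ = (k + 3 + √(k² − 2k + 9))/2` and `r₀ = x₀ + ln((x₀ − k)/x₀²)`:
`x₀ > 2`, `x₀ > k`, `x₀` is a fixed point of `f(x,r) = x² exp(r − x) + k` at `r₀`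
with multiplier `−1`, the transversality condition `∂²f/∂r∂x (x₀,r₀) = −1 ≠ 0`
holds, and the flip nondegeneracy quantity is strictly positive. -/
theorem chialvo_flip_bifurcation (k x₀ r₀ : ℝ) (hk : 0 ≤ k)
    (hx₀ : x₀ = (k + 3 + Real.sqrt (k ^ 2 - 2 * k + 9)) / 2)
    (hr₀ : r₀ = x₀ + Real.log ((x₀ - k) / x₀ ^ 2)) :
    2 < x₀ ∧ k < x₀ ∧
    x₀ ^ 2 * Real.exp (r₀ - x₀) + k = x₀ ∧
    x₀ * (2 - x₀) * Real.exp (r₀ - x₀) = -1 ∧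
    deriv (fun r : ℝ => deriv (fun x : ℝ => x ^ 2 * Real.exp (r - x) + k) x₀) r₀ = -1 ∧
    deriv (fun r : ℝ => deriv (fun x : ℝ => x ^ 2 * Real.exp (r - x) + k) x₀) r₀ ≠ 0 ∧
    0 < (1 / 2) * (deriv (deriv (fun x : ℝ => x ^ 2 * Real.exp (r₀ - x) + k)) x₀) ^ 2 +
        (1 / 3) * deriv (deriv (deriv (fun x : ℝ => x ^ 2 * Real.exp (r₀ - x) + k))) x₀ :=
  chialvo_flip_bifurcation_general k x₀ r₀ hx₀ hr₀
end

section
/- There exists a parameter value r* ∈ (2.43, 2.44) such that for the Chialvo map f_{r*}(x) = x²·exp(r* − x) (i.e. k = 0) the third iterate of the critical point c = 2 is an unstable fixed point: setting p = f_{r*}³(2), one has f_{r*}(p) = p and p > 3 (so that |f'_{r*}(p)| = p − 2 > 1). In particular, f_{r*} is a Misiurewicz map: the critical orbit lands on an unstable fixed point in finitely many steps. -/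
/-!
Write `f_r(x) = x² e^{r - x}` and `H(r) = f_r⁴(2) - f_r³(2)`. Since `f_r(x)` is increasing in
`x ≥ 0` through `x²` and in `r`, decreasing in `x` through `e^{-x}`, an enclosure `x ∈ [a, b]`
and `r ∈ [r₀, r₁]` gives `f_r(x) ∈ [a² e^{r₀ - b}, b² e^{r₁ - a}]`; bounding these exponentials
by Taylor polynomials of `e^{t/k}` raised to the `k`-th power and following the critical orbit
gives `H(2.43) < 0 < H(2.44)` and `f_r³(2) > 3` for all `r ∈ [2.43, 2.44]`. The intermediate
value theorem then yields `r*` with `f_{r*}(p) = p` for `p = f_{r*}³(2)`.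
-/

open Real Set
open scoped Nat

noncomputable def expTaylor (n : ℕ) (x : ℝ) : ℝ := ∑ i ∈ Finset.range n, x ^ i / i !

noncomputable def expTaylorRem (n : ℕ) (x : ℝ) : ℝ := |x| ^ n * (n.succ / (n ! * n))

section TaylorBounds

variable {k n : ℕ} {t : ℝ}

theorem abs_exp_div_sub_expTaylor_le (hk : 0 < k) (hn : 0 < n) (ht : |t| ≤ k) :
    |exp (t / k) - expTaylor n (t / k)| ≤ expTaylorRem n (t / k) := by
  refine Real.exp_bound ?_ hn
  rw [abs_div, Nat.abs_cast, div_le_one (by positivity)]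
  exact ht

theorem exp_eq_exp_div_pow (hk : 0 < k) : exp t = exp (t / k) ^ k := by
  rw [← Real.exp_nat_mul, mul_div_cancel₀ _ (by positivity)]

theorem exp_le_expTaylor_add_pow (hk : 0 < k) (hn : 0 < n) (ht : |t| ≤ k) :
    exp t ≤ (expTaylor n (t / k) + expTaylorRem n (t / k)) ^ k := by
  rw [exp_eq_exp_div_pow hk]
  have := (abs_le.1 (abs_exp_div_sub_expTaylor_le hk hn ht)).2
  exact pow_le_pow_left₀ (exp_pos _).le (by linarith) k

theorem expTaylor_sub_pow_le_exp (hk : 0 < k) (hn : 0 < n) (ht : |t| ≤ k)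
    (hpos : 0 ≤ expTaylor n (t / k) - expTaylorRem n (t / k)) :
    (expTaylor n (t / k) - expTaylorRem n (t / k)) ^ k ≤ exp t := by
  rw [exp_eq_exp_div_pow hk]
  have := (abs_le.1 (abs_exp_div_sub_expTaylor_le hk hn ht)).1
  exact pow_le_pow_left₀ hpos (by linarith) k

end TaylorBounds

noncomputable def chialvo (r x : ℝ) : ℝ := x ^ 2 * exp (r - x)

theorem continuous_chialvo_iterate (n : ℕ) (x : ℝ) : Continuous fun r ↦ (chialvo r)^[n] x := by
  induction n with
  | zero => exact continuous_const
  | succ n ih =>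
    simp only [Function.iterate_succ_apply', chialvo]
    fun_prop

theorem chialvo_mem_Icc {r₀ r₁ r a b x L U : ℝ} (hr : r ∈ Icc r₀ r₁) (hx : x ∈ Icc a b)
    (ha : 0 ≤ a) (hL : L ≤ exp (r₀ - b)) (hU : exp (r₁ - a) ≤ U) :
    chialvo r x ∈ Icc (a ^ 2 * L) (b ^ 2 * U) := by
  have hexp : exp (r - x) ∈ Icc L U :=
    ⟨hL.trans (exp_le_exp.2 (by linarith [hr.1, hx.2])),
      (exp_le_exp.2 (by linarith [hr.2, hx.1])).trans hU⟩
  unfold chialvo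
  constructor
  · calc a ^ 2 * L ≤ a ^ 2 * exp (r - x) := by gcongr; exact hexp.1
      _ ≤ x ^ 2 * exp (r - x) := by gcongr; exact hx.1
  · calc x ^ 2 * exp (r - x) ≤ b ^ 2 * exp (r - x) := by gcongr; exacts [ha.trans hx.1, hx.2]
      _ ≤ b ^ 2 * U := by gcongr; exact hexp.2

theorem chialvo_iterate_succ_mem_Icc_of_taylor {r₀ r₁ r a b l u x : ℝ} {m : ℕ} (k n : ℕ)
    (hr : r ∈ Icc r₀ r₁) (hx : (chialvo r)^[m] x ∈ Icc a b) (ha : 0 ≤ a)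
    (hk : 0 < k) (hn : 0 < n) (hk₀ : |r₀ - b| ≤ k) (hk₁ : |r₁ - a| ≤ k)
    (hpos : 0 ≤ expTaylor n ((r₀ - b) / k) - expTaylorRem n ((r₀ - b) / k))
    (hl : l ≤ a ^ 2 * (expTaylor n ((r₀ - b) / k) - expTaylorRem n ((r₀ - b) / k)) ^ k)
    (hu : b ^ 2 * (expTaylor n ((r₁ - a) / k) + expTaylorRem n ((r₁ - a) / k)) ^ k ≤ u) :
    (chialvo r)^[m + 1] x ∈ Icc l u := by
  rw [Function.iterate_succ_apply']
  exact Icc_subset_Icc hl hu <| chialvo_mem_Icc hr hx ha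
    (expTaylor_sub_pow_le_exp hk hn hk₀ hpos) (exp_le_expTaylor_add_pow hk hn hk₁)

theorem chialvo_iterate_four_lt_iterate_three_243 :
    (chialvo 2.43)^[4] 2 < (chialvo 2.43)^[3] 2 := by
  have hr : (2.43 : ℝ) ∈ Icc 2.43 2.43 := ⟨le_rfl, le_rfl⟩
  have h0 : (chialvo 2.43)^[0] 2 ∈ Icc 2 2 := ⟨le_rfl, le_rfl⟩
  have h1 : (chialvo 2.43)^[1] 2 ∈ Icc 6.149 6.1491 := by
    apply chialvo_iterate_succ_mem_Icc_of_taylor 4 8 hr h0 <;> norm_num [expTaylor, expTaylorRem]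
  have h2 : (chialvo 2.43)^[2] 2 ∈ Icc 0.9168 0.9173 := by
    apply chialvo_iterate_succ_mem_Icc_of_taylor 4 8 hr h1 <;> norm_num [expTaylor, expTaylorRem]
  have h3 : (chialvo 2.43)^[3] 2 ∈ Icc 3.8151 3.8212 := by
    apply chialvo_iterate_succ_mem_Icc_of_taylor 4 8 hr h2 <;> norm_num [expTaylor, expTaylorRem]
  have h4 : (chialvo 2.43)^[4] 2 ∈ Icc 3.6209 3.6548 := by
    apply chialvo_iterate_succ_mem_Icc_of_taylor 4 8 hr h3 <;> norm_num [expTaylor, expTaylorRem]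
  linarith [h4.2, h3.1]

theorem chialvo_iterate_three_lt_iterate_four_244 :
    (chialvo 2.44)^[3] 2 < (chialvo 2.44)^[4] 2 := by
  have hr : (2.44 : ℝ) ∈ Icc 2.44 2.44 := ⟨le_rfl, le_rfl⟩
  have h0 : (chialvo 2.44)^[0] 2 ∈ Icc 2 2 := ⟨le_rfl, le_rfl⟩
  have h1 : (chialvo 2.44)^[1] 2 ∈ Icc 6.2108 6.2109 := by
    apply chialvo_iterate_succ_mem_Icc_of_taylor 4 8 hr h0 <;> norm_num [expTaylor, expTaylorRem]
  have h2 : (chialvo 2.44)^[2] 2 ∈ Icc 0.8881 0.8886 := by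
    apply chialvo_iterate_succ_mem_Icc_of_taylor 4 8 hr h1 <;> norm_num [expTaylor, expTaylorRem]
  have h3 : (chialvo 2.44)^[3] 2 ∈ Icc 3.7212 3.7273 := by
    apply chialvo_iterate_succ_mem_Icc_of_taylor 4 8 hr h2 <;> norm_num [expTaylor, expTaylorRem]
  have h4 : (chialvo 2.44)^[4] 2 ∈ Icc 3.822 3.8581 := by
    apply chialvo_iterate_succ_mem_Icc_of_taylor 4 8 hr h3 <;> norm_num [expTaylor, expTaylorRem]
  linarith [h3.2, h4.1]

theorem three_lt_chialvo_iterate_three {r : ℝ} (hr : r ∈ Icc 2.43 2.44) :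
    3 < (chialvo r)^[3] 2 := by
  have h0 : (chialvo r)^[0] 2 ∈ Icc 2 2 := ⟨le_rfl, le_rfl⟩
  have h1 : (chialvo r)^[1] 2 ∈ Icc 6.149 6.2109 := by
    apply chialvo_iterate_succ_mem_Icc_of_taylor 4 8 hr h0 <;> norm_num [expTaylor, expTaylorRem]
  have h2 : (chialvo r)^[2] 2 ∈ Icc 0.8618 0.9453 := by
    apply chialvo_iterate_succ_mem_Icc_of_taylor 4 8 hr h1 <;> norm_num [expTaylor, expTaylorRem]
  have h3 : (chialvo r)^[3] 2 ∈ Icc 3.278 4.3306 := by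
    apply chialvo_iterate_succ_mem_Icc_of_taylor 4 8 hr h2 <;> norm_num [expTaylor, expTaylorRem]
  linarith [h3.1]

/-- Existence of a Misiurewicz parameter for the 1D Chialvo map with `k = 0`:
there is `r* ∈ (2.43, 2.44)` such that the third iterate `p = f_{r*}³(2)` of the
critical point `c = 2` under `f_{r*}(x) = x² exp(r* − x)` is a fixed point with
`p > 3` (hence unstable, as `|f'_{r*}(p)| = p − 2 > 1`). -/
theorem chialvo_misiurewicz_parameter :
    ∃ r ∈ Set.Ioo (2.43 : ℝ) 2.44, ∃ p : ℝ,
      p = (fun x : ℝ => x ^ 2 * Real.exp (r - x))^[3] 2 ∧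
      p ^ 2 * Real.exp (r - p) = p ∧ 3 < p := by
  have hcont : ContinuousOn (fun r ↦ (chialvo r)^[4] 2 - (chialvo r)^[3] 2) (Icc 2.43 2.44) :=
    ((continuous_chialvo_iterate 4 2).sub (continuous_chialvo_iterate 3 2)).continuousOn
  obtain ⟨r, hr, hfix⟩ := intermediate_value_Ioo (by norm_num) hcont
    ⟨sub_neg.2 chialvo_iterate_four_lt_iterate_three_243,
      sub_pos.2 chialvo_iterate_three_lt_iterate_four_244⟩
  have hfixed : chialvo r ((chialvo r)^[3] 2) = (chialvo r)^[3] 2 := by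
    rw [← Function.iterate_succ_apply' (chialvo r) 3]
    exact sub_eq_zero.1 hfix
  exact ⟨r, hr, _, rfl, hfixed, three_lt_chialvo_iterate_three (Ioo_subset_Icc_self hr)⟩
end
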